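/- Refined local limit approximation for the symmetric binomial: for n ∈ ℕ and integer 0 ≤ k ≤ n define f(k) := −(2k−n)⁴/(12n²) + (2k−n)²/(2n) − 1/4 and g(k) := (2k−n)⁸/(288n⁴) − 3(2k−n)⁶/(40n³) + 19(2k−n)⁴/(48n²) − 11(2k−n)²/(24n) + 1/32, and set P̃(k) := (πn/2)^{−1/2} · exp( −(k − n/2)² / (n/2) ) · ( 1 + f(k)/n + g(k)/n² ). Then for every constant A > 0 there exist C > 0 and N such that for all n ≥ N and every integer k with |k − n/2| ≤ (A/2)·√(n·ln n), one has | C(n,k)·2^{−n} − P̃(k) | ≤ C · (ln n)⁶ · n^{−3} · P̃(k). -/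

import Mathlib

/-- First-order Stirling correction polynomial `f(k)`. -/
noncomputable def fcorr (n k : ℕ) : ℝ :=
  -((2 * (k : ℝ) - n) ^ 4) / (12 * (n : ℝ) ^ 2)
    + (2 * (k : ℝ) - n) ^ 2 / (2 * (n : ℝ)) - 1 / 4

/-- Second-order Stirling correction polynomial `g(k)`. -/
noncomputable def gcorr (n k : ℕ) : ℝ :=
  (2 * (k : ℝ) - n) ^ 8 / (288 * (n : ℝ) ^ 4)
    - 3 * (2 * (k : ℝ) - n) ^ 6 / (40 * (n : ℝ) ^ 3)
    + 19 * (2 * (k : ℝ) - n) ^ 4 / (48 * (n : ℝ) ^ 2)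
    - 11 * (2 * (k : ℝ) - n) ^ 2 / (24 * (n : ℝ)) + 1 / 32

/-- Refined local-limit approximation `P̃(k)` of the `Binomial(n, 1/2)` pmf. -/
noncomputable def Ptilde (n k : ℕ) : ℝ :=
  (Real.sqrt (Real.pi * n / 2))⁻¹ * Real.exp (-(((k : ℝ) - n / 2) ^ 2) / ((n : ℝ) / 2))
    * (1 + fcorr n k / n + gcorr n k / (n : ℝ) ^ 2)

/-!
Write `k = n (1 + u) / 2`. Stirling's formula with its `1 / (12 n)` term and a remainder of
order `n⁻³` (which follows from Robbins' two-sided bound on one step of the Stirling sequence)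
expresses `log (C(n,k) 2⁻ⁿ)` exactly through `(1 + u) log (1 + u) + (1 - u) log (1 - u)`,
`log (1 - u²)` and three remainders. Expanding in `u`, the logarithm of the ratio to the Gaussian
is `p + q + δ` with `p = O(σ)`, `q = O(σ²)`, `δ = O(σ³)` for `σ = n b²`, as soon as `u² ≤ b` and
`1 ≤ n b`. Exponentiating to second order, `1 + p + p² / 2 + q` is exactly
`1 + f(k) / n + g(k) / n²`, with error `O(σ³)`. On the window one takes `b = A² log n / n`, so
that `σ³ = A¹² (log n)⁶ / n³`.
-/

open Real Filter Topology Stirling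
open scoped Nat

lemma log_stirlingSeq_sdiff_ge {n : ℕ} (hn : n ≠ 0) :
    1 / (3 * (2 * n + 1) ^ 2) ≤ log (stirlingSeq n) - log (stirlingSeq (n + 1)) := by
  obtain ⟨m, rfl⟩ := Nat.exists_eq_add_one_of_ne_zero hn
  refine le_of_eq_of_le ?_ (le_hasSum (log_stirlingSeq_sdiff_hasSum m) 0 fun j _ ↦ by positivity)
  push_cast
  field_simp
  ring

noncomputable def stirlingError (n : ℕ) : ℝ :=
  log n ! - ((n + 1 / 2) * log n - n + log (2 * π) / 2 + 1 / (12 * n))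

lemma stirlingError_eq {n : ℕ} (hn : n ≠ 0) :
    stirlingError n = log (stirlingSeq n) - log √π - 1 / (12 * n) := by
  have hn' : (n : ℝ) ≠ 0 := Nat.cast_ne_zero.2 hn
  rw [stirlingError, log_stirlingSeq_formula, log_sqrt pi_pos.le, log_mul two_ne_zero hn',
    log_mul two_ne_zero pi_ne_zero, log_div hn' (exp_pos 1).ne', log_exp]
  ring

lemma tendsto_stirlingError : Tendsto stirlingError atTop (𝓝 0) := by
  have hlog : Tendsto (fun n ↦ log (stirlingSeq n)) atTop (𝓝 (log √π)) :=
    (continuousAt_log (by positivity)).tendsto.comp tendsto_stirlingSeq_sqrt_pi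
  have hinv : Tendsto (fun n : ℕ ↦ 1 / (12 * (n : ℝ))) atTop (𝓝 0) := by
    simpa only [one_div, mul_inv, mul_zero] using
      (tendsto_inv_atTop_nhds_zero_nat (𝕜 := ℝ)).const_mul (12 : ℝ)⁻¹
  have := (hlog.sub_const (log √π)).sub hinv
  rw [sub_self, sub_zero] at this
  exact this.congr' ((eventually_ne_atTop 0).mono fun n hn ↦ (stirlingError_eq hn).symm)

lemma stirlingError_sub_stirlingError_succ {n : ℕ} (hn : n ≠ 0) :
    stirlingError n - stirlingError (n + 1) =
      log (stirlingSeq n) - log (stirlingSeq (n + 1)) - 1 / (12 * n * (n + 1)) := by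
  rw [stirlingError_eq hn, stirlingError_eq n.succ_ne_zero]
  push_cast
  field_simp
  ring

lemma stirlingError_le_succ {n : ℕ} (hn : n ≠ 0) : stirlingError n ≤ stirlingError (n + 1) := by
  have := log_stirlingSeq_sdiff_le n
  linarith [stirlingError_sub_stirlingError_succ hn]

/-- Robbins' bounds `1 / (3 (2n + 1)²) ≤ log sₙ - log sₙ₊₁ ≤ 1 / (12 n (n + 1))` leave a gap
`1 / (12 n (n + 1) (2n + 1)²)`, which is at most `1 / (144 n³) - 1 / (144 (n + 1)³)`. -/
lemma stirlingError_succ_add_le {n : ℕ} (hn : n ≠ 0) :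
    stirlingError (n + 1) + 1 / (144 * (n + 1) ^ 3) ≤ stirlingError n + 1 / (144 * n ^ 3) := by
  have hstep := stirlingError_sub_stirlingError_succ hn
  have hlow := log_stirlingSeq_sdiff_ge hn
  have hpos : (0 : ℝ) < n := Nat.cast_pos.2 (Nat.pos_of_ne_zero hn)
  have key : 1 / (12 * n * (n + 1)) - 1 / (3 * (2 * n + 1) ^ 2) ≤
      1 / (144 * (n : ℝ) ^ 3) - 1 / (144 * (n + 1) ^ 3) := by
    rw [div_sub_div _ _ (by positivity) (by positivity),
      div_sub_div _ _ (by positivity) (by positivity),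
      div_le_div_iff₀ (by positivity) (by positivity)]
    ring_nf
    nlinarith [pow_pos hpos 3, pow_pos hpos 5, pow_pos hpos 7, pow_pos hpos 9]
  linarith

theorem abs_stirlingError_le {n : ℕ} (hn : n ≠ 0) : |stirlingError n| ≤ 1 / (144 * n ^ 3) := by
  obtain ⟨m, rfl⟩ := Nat.exists_eq_add_one_of_ne_zero hn
  set c : ℕ → ℝ := fun j ↦ 1 / (144 * ((j + 1 : ℕ) : ℝ) ^ 3)
  have hc : Tendsto c atTop (𝓝 0) :=
    tendsto_const_nhds.div_atTop <| (tendsto_pow_atTop three_ne_zero).comp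
      (tendsto_natCast_atTop_atTop.comp (tendsto_add_atTop_nat 1)) |>.const_mul_atTop (by norm_num)
  have he := tendsto_stirlingError.comp (tendsto_add_atTop_nat 1)
  have hmono : Monotone fun j ↦ stirlingError (j + 1) :=
    monotone_nat_of_le_succ fun j ↦ stirlingError_le_succ j.succ_ne_zero
  have hanti : Antitone fun j ↦ stirlingError (j + 1) + c j :=
    antitone_nat_of_succ_le fun j ↦ by simpa [c] using stirlingError_succ_add_le j.succ_ne_zero
  have hc₀ : 0 ≤ c m := by positivity
  rw [abs_le]
  constructor
  · linarith [hanti.le_of_tendsto (by simpa using he.add hc) m]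
  · linarith [hmono.ge_of_tendsto he m]

lemma abs_sum_range_pow_div_add_log_one_sub_le {x : ℝ} (hx : |x| ≤ 1 / 2) (N : ℕ) :
    |(∑ i ∈ Finset.range N, x ^ (i + 1) / (i + 1)) + log (1 - x)| ≤ 2 * |x| ^ (N + 1) := by
  refine (abs_log_sub_add_sum_range_le (hx.trans_lt (by norm_num)) N).trans ?_
  rw [div_le_iff₀ (by linarith)]
  nlinarith [pow_nonneg (abs_nonneg x) (N + 1)]

lemma abs_one_add_mul_log_add_one_sub_mul_log_sub_le {v : ℝ} (hv : |v| ≤ 1 / 2) :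
    |(1 + v) * log (1 + v) + (1 - v) * log (1 - v) - (v ^ 2 + v ^ 4 / 6 + v ^ 6 / 15)| ≤
      7 * v ^ 8 := by
  have h8 : |v| ^ 8 = v ^ 8 := by rw [pow_abs, abs_of_nonneg (by positivity)]
  have hminus : |log (1 - v) + (v + v ^ 2 / 2 + v ^ 3 / 3 + v ^ 4 / 4 + v ^ 5 / 5 + v ^ 6 / 6
      + v ^ 7 / 7)| ≤ 2 * v ^ 8 := by
    have h := abs_sum_range_pow_div_add_log_one_sub_le hv 7
    simp only [Finset.sum_range_succ, Finset.sum_range_zero, h8] at h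
    convert h using 2; push_cast; ring
  have hplus : |log (1 + v) - (v - v ^ 2 / 2 + v ^ 3 / 3 - v ^ 4 / 4 + v ^ 5 / 5 - v ^ 6 / 6
      + v ^ 7 / 7)| ≤ 2 * v ^ 8 := by
    have h := abs_sum_range_pow_div_add_log_one_sub_le (x := -v) (by rwa [abs_neg]) 7
    simp only [Finset.sum_range_succ, Finset.sum_range_zero, abs_neg, h8, sub_neg_eq_add] at h
    convert h using 2; push_cast; ring
  set rminus := log (1 - v) + (v + v ^ 2 / 2 + v ^ 3 / 3 + v ^ 4 / 4 + v ^ 5 / 5 + v ^ 6 / 6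
      + v ^ 7 / 7)
  set rplus := log (1 + v) - (v - v ^ 2 / 2 + v ^ 3 / 3 - v ^ 4 / 4 + v ^ 5 / 5 - v ^ 6 / 6
      + v ^ 7 / 7)
  have hdecomp : (1 + v) * log (1 + v) + (1 - v) * log (1 - v) - (v ^ 2 + v ^ 4 / 6 + v ^ 6 / 15)
      = (1 + v) * rplus + (1 - v) * rminus + 2 * v ^ 8 / 7 := by
    simp only [rplus, rminus]; ring
  obtain ⟨hv₁, hv₂⟩ := abs_le.1 hv
  have hplus' : |(1 + v) * rplus| ≤ 3 / 2 * (2 * v ^ 8) := by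
    rw [abs_mul, abs_of_pos (by linarith)]
    exact mul_le_mul (by linarith) hplus (abs_nonneg _) (by norm_num)
  have hminus' : |(1 - v) * rminus| ≤ 3 / 2 * (2 * v ^ 8) := by
    rw [abs_mul, abs_of_pos (by linarith)]
    exact mul_le_mul (by linarith) hminus (abs_nonneg _) (by norm_num)
  have hrest : |2 * v ^ 8 / 7| = 2 * v ^ 8 / 7 := abs_of_nonneg (by positivity)
  rw [hdecomp]
  calc _ ≤ |(1 + v) * rplus| + |(1 - v) * rminus| + |2 * v ^ 8 / 7| := abs_add_three _ _ _
    _ ≤ 7 * v ^ 8 := by linarith [pow_two_nonneg (v ^ 4)]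

lemma abs_log_one_sub_sq_add_le {v : ℝ} (hv : |v| ≤ 1 / 2) :
    |log (1 - v ^ 2) + v ^ 2 + v ^ 4 / 2| ≤ 2 * v ^ 6 := by
  have hv2 : |v ^ 2| ≤ 1 / 2 := by
    rw [abs_pow]; nlinarith [abs_nonneg v]
  have h := abs_sum_range_pow_div_add_log_one_sub_le hv2 2
  simp only [Finset.sum_range_succ, Finset.sum_range_zero] at h
  convert h using 2
  · push_cast; ring
  · rw [abs_of_nonneg (sq_nonneg v)]; ring

lemma abs_exp_sub_quadratic_le {x : ℝ} (hx : |x| ≤ 1) :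
    |exp x - (1 + x + x ^ 2 / 2)| ≤ |x| ^ 3 := by
  have h := exp_bound hx (n := 3) (by norm_num)
  simp only [Finset.sum_range_succ, Finset.sum_range_zero] at h
  norm_num at h
  calc _ = |exp x - (1 + x + x ^ 2 / 2)| := by ring_nf
    _ ≤ |x| ^ 3 * (2 / 9) := by convert h using 3
    _ ≤ |x| ^ 3 := by nlinarith [pow_nonneg (abs_nonneg x) 3]

lemma log_factorial_eq (n : ℕ) :
    log n ! = (n + 1 / 2) * log n - n + log (2 * π) / 2 + 1 / (12 * n) + stirlingError n := by
  rw [stirlingError]; ring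

lemma log_choose_div_two_pow {n k : ℕ} (hk : k ≤ n) :
    log (n.choose k / 2 ^ n) = log n ! - log k ! - log (n - k)! - n * log 2 := by
  rw [Nat.cast_choose ℝ hk, div_div, log_div (by positivity) (by positivity),
    log_mul (by positivity) (by positivity), log_mul (by positivity) (by positivity), log_pow]
  ring

theorem log_choose_div_two_pow_eq {n k : ℕ} (hk₀ : 0 < k) (hkn : k < n) {u : ℝ}
    (hu : (k : ℝ) = n * (1 + u) / 2) :
    log (n.choose k / 2 ^ n) = -log (π * n / 2) / 2
      - n / 2 * ((1 + u) * log (1 + u) + (1 - u) * log (1 - u)) - log (1 - u ^ 2) / 2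
      - (1 / (4 * n) + u ^ 2 / (3 * n) + u ^ 4 / (3 * n * (1 - u ^ 2)))
      + (stirlingError n - stirlingError k - stirlingError (n - k)) := by
  have hn : (0 : ℝ) < n := Nat.cast_pos.2 (hk₀.trans hkn)
  have hk : (0 : ℝ) < k := Nat.cast_pos.2 hk₀
  have hnk : ((n - k : ℕ) : ℝ) = n * (1 - u) / 2 := by
    rw [Nat.cast_sub hkn.le, hu]; ring
  have hnk₀ : (0 : ℝ) < ((n - k : ℕ) : ℝ) := Nat.cast_pos.2 (Nat.sub_pos_of_lt hkn)
  have hplus : 0 < 1 + u := by nlinarith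
  have hminus : 0 < 1 - u := by nlinarith
  rw [log_choose_div_two_pow hkn.le, log_factorial_eq n, log_factorial_eq k,
    log_factorial_eq (n - k), hnk, hu, log_div (by positivity) two_ne_zero,
    log_div (by positivity) two_ne_zero, log_div (by positivity) two_ne_zero,
    log_mul hn.ne' hplus.ne', log_mul hn.ne' hminus.ne', log_mul pi_ne_zero hn.ne',
    log_mul two_ne_zero pi_ne_zero, show 1 - u ^ 2 = (1 + u) * (1 - u) by ring,
    log_mul hplus.ne' hminus.ne']
  field_simp
  ring

/-- With `m = n` and `u = (2k - n) / n`, the terms of order `1 / n` and `1 / n²` of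
`log (C(n,k) 2⁻ⁿ) + log (π n / 2) / 2 + n u² / 2`; exponentiating them to second order gives
`fcorr` and `gcorr` (`fcorr_div_eq`, `gcorr_div_sq_eq`). -/
noncomputable def logCorrection₁ (m u : ℝ) : ℝ := -1 / (4 * m) + u ^ 2 / 2 - m * u ^ 4 / 12

noncomputable def logCorrection₂ (m u : ℝ) : ℝ := -u ^ 2 / (3 * m) + u ^ 4 / 4 - m * u ^ 6 / 30

lemma fcorr_div_eq {n k : ℕ} (hn : n ≠ 0) {u : ℝ} (hu : (k : ℝ) = n * (1 + u) / 2) :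
    fcorr n k / n = logCorrection₁ n u := by
  rw [fcorr, logCorrection₁, hu]
  field_simp
  ring

lemma gcorr_div_sq_eq {n k : ℕ} (hn : n ≠ 0) {u : ℝ} (hu : (k : ℝ) = n * (1 + u) / 2) :
    gcorr n k / n ^ 2 = logCorrection₁ n u ^ 2 / 2 + logCorrection₂ n u := by
  rw [gcorr, logCorrection₁, logCorrection₂, hu]
  field_simp
  ring

lemma Ptilde_eq {n k : ℕ} (hn : n ≠ 0) {u : ℝ} (hu : (k : ℝ) = n * (1 + u) / 2) :
    Ptilde n k = (√(π * n / 2))⁻¹ * exp (-(n * u ^ 2 / 2)) *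
      (1 + logCorrection₁ n u + logCorrection₁ n u ^ 2 / 2 + logCorrection₂ n u) := by
  have hexp : -((k : ℝ) - n / 2) ^ 2 / (n / 2) = -(n * u ^ 2 / 2) := by
    rw [hu]; field_simp; ring
  rw [Ptilde, fcorr_div_eq hn hu, gcorr_div_sq_eq hn hu, hexp]
  ring

section Scale

variable {m u b : ℝ}

lemma pos_of_one_le_mul_of_sq_le (hmb : 1 ≤ m * b) (hub : u ^ 2 ≤ b) : 0 < m ∧ 0 < b := by
  have hb : 0 < b := ((sq_nonneg u).trans hub).lt_of_ne' (by rintro rfl; norm_num at hmb)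
  exact ⟨pos_of_mul_pos_left (one_pos.trans_le hmb) hb.le, hb⟩

lemma abs_logCorrection₁_le (hmb : 1 ≤ m * b) (hub : u ^ 2 ≤ b) :
    |logCorrection₁ m u| ≤ m * b ^ 2 := by
  obtain ⟨hm, hb⟩ := pos_of_one_le_mul_of_sq_le hmb hub
  have h₁ : 1 / (4 * m) ≤ m * b ^ 2 / 4 := by
    rw [div_le_div_iff₀ (by positivity) (by norm_num)]; nlinarith
  have h₂ : m * u ^ 4 ≤ m * b ^ 2 := by gcongr; nlinarith [sq_nonneg u]
  have h₀ : 0 ≤ 1 / (4 * m) := by positivity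
  have h₀' : 0 ≤ m * u ^ 4 := by positivity
  rw [logCorrection₁, abs_le, neg_div]
  constructor <;> nlinarith [sq_nonneg u]

lemma abs_logCorrection₂_le (hmb : 1 ≤ m * b) (hub : u ^ 2 ≤ b) :
    |logCorrection₂ m u| ≤ (m * b ^ 2) ^ 2 := by
  obtain ⟨hm, hb⟩ := pos_of_one_le_mul_of_sq_le hmb hub
  have hmb3 : m * b ^ 3 ≤ (m * b ^ 2) ^ 2 := by nlinarith [pow_pos hb 3]
  have h₁ : u ^ 2 / (3 * m) ≤ (m * b ^ 2) ^ 2 / 3 := by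
    rw [div_le_div_iff₀ (by positivity) (by norm_num)]; nlinarith
  have h₂ : u ^ 4 ≤ b ^ 2 := by nlinarith [sq_nonneg u]
  have h₃ : m * u ^ 6 ≤ m * b ^ 3 := by gcongr; nlinarith [sq_nonneg u, pow_two_nonneg (u ^ 2)]
  have h₀ : 0 ≤ u ^ 2 / (3 * m) := by positivity
  have h₀' : 0 ≤ m * u ^ 6 := by positivity
  rw [logCorrection₂, abs_le, neg_div]
  constructor <;> nlinarith [pow_two_nonneg (u ^ 2)]

end Scale

lemma abs_log_choose_div_two_pow_sub_logCorrection_le {n k : ℕ} (hk₀ : 0 < k) (hkn : k < n)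
    {u : ℝ} (hu : (k : ℝ) = n * (1 + u) / 2) (hu₂ : |u| ≤ 1 / 2) :
    |log (n.choose k / 2 ^ n) + log (π * n / 2) / 2 + n * u ^ 2 / 2
        - (logCorrection₁ n u + logCorrection₂ n u)| ≤
      7 / 2 * (n * u ^ 8) + u ^ 6 + u ^ 4 / n
        + (1 / (144 * n ^ 3) + 1 / (144 * k ^ 3) + 1 / (144 * ((n - k : ℕ) : ℝ) ^ 3)) := by
  have hn : (0 : ℝ) < n := Nat.cast_pos.2 (hk₀.trans hkn)
  have hΦ := abs_one_add_mul_log_add_one_sub_mul_log_sub_le hu₂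
  have hlog := abs_log_one_sub_sq_add_le hu₂
  have hrat : |u ^ 4 / (3 * n * (1 - u ^ 2))| ≤ u ^ 4 / n := by
    have : 3 / 4 ≤ 1 - u ^ 2 := by nlinarith [sq_abs u, abs_nonneg u]
    rw [abs_of_nonneg (by positivity)]
    gcongr
    nlinarith
  have hstir : |stirlingError n - stirlingError k - stirlingError (n - k)| ≤
      1 / (144 * n ^ 3) + 1 / (144 * k ^ 3) + 1 / (144 * ((n - k : ℕ) : ℝ) ^ 3) := by
    refine (abs_sub _ _).trans (add_le_add ((abs_sub _ _).trans (add_le_add ?_ ?_)) ?_) <;>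
      exact abs_stirlingError_le (by omega)
  rw [log_choose_div_two_pow_eq hk₀ hkn hu]
  set Φ := (1 + u) * log (1 + u) + (1 - u) * log (1 - u)
  set R := stirlingError n - stirlingError k - stirlingError (n - k)
  calc _ = |-(n / 2 * (Φ - (u ^ 2 + u ^ 4 / 6 + u ^ 6 / 15)))
          - (log (1 - u ^ 2) + u ^ 2 + u ^ 4 / 2) / 2 - u ^ 4 / (3 * n * (1 - u ^ 2)) + R| := by
        rw [logCorrection₁, logCorrection₂]; ring_nf
    _ ≤ n / 2 * (7 * u ^ 8) + 2 * u ^ 6 / 2 + u ^ 4 / n + (1 / (144 * n ^ 3)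
          + 1 / (144 * k ^ 3) + 1 / (144 * ((n - k : ℕ) : ℝ) ^ 3)) := by
        refine (abs_add_le _ _).trans (add_le_add ((abs_sub _ _).trans (add_le_add
          ((abs_sub _ _).trans (add_le_add ?_ ?_)) hrat)) hstir)
        · rw [abs_neg, abs_mul, abs_of_pos (by positivity)]; gcongr
        · rw [abs_div, abs_two]; gcongr
    _ = _ := by ring

lemma abs_log_choose_div_two_pow_sub_logCorrection_le_of_scale {n k : ℕ} (hk₀ : 0 < k)
    (hkn : k < n) {u b : ℝ} (hu : (k : ℝ) = n * (1 + u) / 2) (hnb : 1 ≤ n * b) (hub : u ^ 2 ≤ b)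
    (hσ : n * b ^ 2 ≤ 1 / 34) :
    |log (n.choose k / 2 ^ n) + log (π * n / 2) / 2 + n * u ^ 2 / 2
        - (logCorrection₁ n u + logCorrection₂ n u)| ≤ 6 * (n * b ^ 2) ^ 3 := by
  obtain ⟨hn, hb⟩ := pos_of_one_le_mul_of_sq_le hnb hub
  have hbσ : b ≤ n * b ^ 2 := by nlinarith
  have hu₅ : |u| ≤ 1 / 5 := by
    simpa [abs_of_pos] using sq_le_sq.1 (show u ^ 2 ≤ (1 / 5) ^ 2 by nlinarith)
  obtain ⟨hu₁, hu₂⟩ := abs_le.1 hu₅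
  have cube {x y : ℝ} (hx : 0 < x) (h : 1 / x ≤ y) : 1 / (144 * x ^ 3) ≤ y ^ 3 / 144 := by
    rw [show 1 / (144 * x ^ 3) = (1 / x) ^ 3 / 144 by ring]; gcongr
  have hk : 1 / (144 * (k : ℝ) ^ 3) ≤ (5 / 2 * b) ^ 3 / 144 := by
    refine cube (Nat.cast_pos.2 hk₀) ?_
    rw [div_le_iff₀ (Nat.cast_pos.2 hk₀), hu]; nlinarith
  have hnk : 1 / (144 * ((n - k : ℕ) : ℝ) ^ 3) ≤ (5 / 2 * b) ^ 3 / 144 := by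
    refine cube (Nat.cast_pos.2 (Nat.sub_pos_of_lt hkn)) ?_
    rw [div_le_iff₀ (Nat.cast_pos.2 (Nat.sub_pos_of_lt hkn)), Nat.cast_sub hkn.le, hu]; nlinarith
  have hn3 : 1 / (144 * (n : ℝ) ^ 3) ≤ b ^ 3 / 144 := by
    refine cube hn ?_
    rw [div_le_iff₀ hn]; linarith
  have hu8 : n * u ^ 8 ≤ (n * b ^ 2) ^ 3 := by
    calc n * u ^ 8 = n * (u ^ 2) ^ 4 := by ring
      _ ≤ n * b ^ 4 := by gcongr
      _ = (n * b ^ 2) * b ^ 2 := by ring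
      _ ≤ (n * b ^ 2) * (n * b ^ 2) ^ 2 := by gcongr
      _ = (n * b ^ 2) ^ 3 := by ring
  have hu6 : u ^ 6 ≤ b ^ 3 := by
    calc u ^ 6 = (u ^ 2) ^ 3 := by ring
      _ ≤ b ^ 3 := by gcongr
  have hu4 : u ^ 4 / n ≤ b ^ 3 := by
    rw [div_le_iff₀ hn]
    calc u ^ 4 = (u ^ 2) ^ 2 := by ring
      _ ≤ b ^ 2 * (n * b) := by nlinarith [pow_le_pow_left₀ (sq_nonneg u) hub 2]
      _ = b ^ 3 * n := by ring
  have hb3 : b ^ 3 ≤ (n * b ^ 2) ^ 3 := by gcongr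
  refine (abs_log_choose_div_two_pow_sub_logCorrection_le hk₀ hkn hu (by linarith)).trans ?_
  nlinarith

lemma abs_exp_add_add_sub_le {p q δ σ : ℝ} (hσ : σ ≤ 1 / 34) (hp : |p| ≤ σ) (hq : |q| ≤ σ ^ 2)
    (hδ : |δ| ≤ 6 * σ ^ 3) :
    |exp (p + q + δ) - (1 + p + p ^ 2 / 2 + q)| ≤ 9 * σ ^ 3 := by
  have hσ₀ : 0 ≤ σ := (abs_nonneg p).trans hp
  set x := p + q + δ
  have hx : |x| ≤ 21 / 20 * σ := by
    calc |x| ≤ |p| + |q| + |δ| := abs_add_three _ _ _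
      _ ≤ σ + σ ^ 2 + 6 * σ ^ 3 := by gcongr
      _ ≤ 21 / 20 * σ := by nlinarith
  have hquad : 1 + x + x ^ 2 / 2 - (1 + p + p ^ 2 / 2 + q) = δ + (q + δ) * ((x + p) / 2) := by
    simp only [x]; ring
  have hqδ : |q + δ| ≤ 5 / 4 * σ ^ 2 := by
    calc |q + δ| ≤ |q| + |δ| := abs_add_le _ _
      _ ≤ σ ^ 2 + 6 * σ ^ 3 := by gcongr
      _ ≤ 5 / 4 * σ ^ 2 := by nlinarith
  have hxp : |(x + p) / 2| ≤ 41 / 40 * σ := by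
    rw [abs_div, abs_two, div_le_iff₀ two_pos]
    linarith [abs_add_le x p]
  calc |exp x - (1 + p + p ^ 2 / 2 + q)|
      ≤ |exp x - (1 + x + x ^ 2 / 2)| + |δ + (q + δ) * ((x + p) / 2)| := by
        rw [← hquad]; exact abs_sub_le _ _ _
    _ ≤ |x| ^ 3 + (|δ| + |q + δ| * |(x + p) / 2|) := by
        gcongr
        · exact abs_exp_sub_quadratic_le (by nlinarith)
        · rw [← abs_mul]; exact abs_add_le _ _
    _ ≤ (21 / 20 * σ) ^ 3 + (6 * σ ^ 3 + 5 / 4 * σ ^ 2 * (41 / 40 * σ)) := by gcongr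
    _ ≤ 9 * σ ^ 3 := by nlinarith [pow_nonneg hσ₀ 3]

theorem abs_choose_div_two_pow_sub_Ptilde_le {n k : ℕ} (hk : k ≤ n) {u b : ℝ}
    (hu : (k : ℝ) = n * (1 + u) / 2) (hnb : 1 ≤ n * b) (hub : u ^ 2 ≤ b)
    (hσ : n * b ^ 2 ≤ 1 / 34) :
    |(n.choose k : ℝ) / 2 ^ n - Ptilde n k| ≤ 18 * (n * b ^ 2) ^ 3 * Ptilde n k := by
  obtain ⟨hn, hb⟩ := pos_of_one_le_mul_of_sq_le hnb hub
  have hu₁ : |u| < 1 := by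
    refine abs_lt.2 ⟨?_, ?_⟩ <;> nlinarith
  have hk₀ : 0 < k := by
    suffices (0 : ℝ) < k by exact_mod_cast this
    rw [hu]; nlinarith [abs_lt.1 hu₁]
  have hkn : k < n := by
    suffices (k : ℝ) < n by exact_mod_cast this
    rw [hu]; nlinarith [abs_lt.1 hu₁]
  set σ := n * b ^ 2
  set p := logCorrection₁ n u
  set q := logCorrection₂ n u
  set G := (√(π * n / 2))⁻¹ * exp (-(n * u ^ 2 / 2))
  set W := log (n.choose k / 2 ^ n) + log (π * n / 2) / 2 + n * u ^ 2 / 2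
  have hpmf : (n.choose k : ℝ) / 2 ^ n = G * exp W := by
    have hpos : (0 : ℝ) < n.choose k / 2 ^ n := by
      have := Nat.choose_pos hk; positivity
    simp only [G, W]
    rw [exp_add, exp_add, exp_log hpos, exp_half, exp_log (by positivity), exp_neg]
    field_simp
  have hp := abs_logCorrection₁_le hnb hub
  have hq := abs_logCorrection₂_le hnb hub
  have hexp : |exp W - (1 + p + p ^ 2 / 2 + q)| ≤ 9 * σ ^ 3 := by
    simpa using abs_exp_add_add_sub_le hσ hp hq
      (abs_log_choose_div_two_pow_sub_logCorrection_le_of_scale hk₀ hkn hu hnb hub hσ)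
  have hQ : 1 / 2 ≤ 1 + p + p ^ 2 / 2 + q := by
    nlinarith [abs_le.1 hp, abs_le.1 hq, sq_nonneg p]
  have hG : 0 ≤ G := by positivity
  rw [hpmf, Ptilde_eq (by omega) hu, ← mul_sub, abs_mul, abs_of_nonneg hG]
  calc G * |exp W - (1 + p + p ^ 2 / 2 + q)| ≤ G * (18 * σ ^ 3 * (1 + p + p ^ 2 / 2 + q)) := by
        gcongr; nlinarith [pow_nonneg (show 0 ≤ σ by positivity) 3]
    _ = _ := by ring

lemma eventually_one_le_mul_log_and_mul_log_sq_le {c : ℝ} (hc : 0 < c) :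
    ∀ᶠ n : ℕ in atTop, 1 ≤ c * log n ∧ 34 * c ^ 2 * log n ^ 2 ≤ n := by
  have hlog : ∀ᶠ n : ℕ in atTop, 1 / c ≤ log n :=
    (tendsto_log_atTop.comp tendsto_natCast_atTop_atTop).eventually_ge_atTop _
  have hsmall : ∀ᶠ n : ℕ in atTop, ‖log n ^ 2‖ ≤ 1 / (34 * c ^ 2) * ‖(n : ℝ)‖ :=
    tendsto_natCast_atTop_atTop.eventually
      ((isLittleO_pow_log_id_atTop (n := 2)).bound (by positivity))
  filter_upwards [hlog, hsmall] with n hlog hsmall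
  rw [Real.norm_of_nonneg (sq_nonneg _), Real.norm_natCast] at hsmall
  constructor
  · rwa [div_le_iff₀' hc] at hlog
  · rwa [div_mul_eq_mul_div, one_mul, le_div_iff₀' (by positivity)] at hsmall

lemma sq_two_mul_sub_div_le {n k A : ℝ} (hn : 0 < n) (hlog : 0 ≤ log n)
    (h : |k - n / 2| ≤ A / 2 * √(n * log n)) : ((2 * k - n) / n) ^ 2 ≤ A ^ 2 * log n / n := by
  have h2 : |2 * k - n| ≤ A * √(n * log n) := by
    rw [show 2 * k - n = 2 * (k - n / 2) by ring, abs_mul, abs_two]; linarith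
  rw [div_pow, div_le_div_iff₀ (by positivity) hn, ← sq_abs]
  calc |2 * k - n| ^ 2 * n ≤ (A * √(n * log n)) ^ 2 * n := by
        gcongr
    _ = A ^ 2 * log n * n ^ 2 := by
        rw [mul_pow, sq_sqrt (by positivity)]; ring

/-- Refined local limit theorem for the symmetric binomial: on the
window `|k − n/2| ≤ (A/2)√(n ln n)`,
`C(n,k)·2^{−n} = P̃(k)·(1 + O((ln n)⁶/n³))`. -/
theorem binomial_local_limit_refined :
    ∀ A : ℝ, 0 < A → ∃ C : ℝ, 0 < C ∧ ∃ N : ℕ, ∀ n : ℕ, N ≤ n →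
      ∀ k : ℕ, k ≤ n → |(k : ℝ) - (n : ℝ) / 2| ≤ (A / 2) * Real.sqrt (n * Real.log n) →
        |(n.choose k : ℝ) / 2 ^ n - Ptilde n k|
          ≤ C * (Real.log n) ^ 6 / (n : ℝ) ^ 3 * Ptilde n k := by
  intro A hA
  obtain ⟨N, hN⟩ :=
    eventually_atTop.1 (eventually_one_le_mul_log_and_mul_log_sq_le (sq_pos_of_pos hA))
  refine ⟨18 * A ^ 12, by positivity, N, fun n hn k hk hwindow ↦ ?_⟩
  obtain ⟨hlog₁, hlog₂⟩ := hN n hn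
  have hlog : 0 < log n := pos_of_mul_pos_right (one_pos.trans_le hlog₁) (sq_nonneg A)
  have hn₀ : (0 : ℝ) < n := Nat.cast_pos.2 (Nat.pos_of_ne_zero (by rintro rfl; simp at hlog))
  set b := A ^ 2 * log n / n
  have hnb : n * b = A ^ 2 * log n := by simp only [b]; field_simp
  have hσ : n * b ^ 2 = (A ^ 2) ^ 2 * log n ^ 2 / n := by simp only [b]; field_simp
  have key := abs_choose_div_two_pow_sub_Ptilde_le hk (u := (2 * k - n) / n)
    (by field_simp; ring) (by rw [hnb]; exact hlog₁) (sq_two_mul_sub_div_le hn₀ hlog.le hwindow)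
    (by rw [hσ, div_le_div_iff₀ hn₀ (by norm_num)]; linarith)
  convert key using 2
  rw [hσ]; field_simp
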